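/- arXiv:1605.03172 — 2 statements merged into one kernel-verified Lean document; each statement's English description precedes it below -/
import Mathlib

section
/- Let A ⊆ [n] with |A| = K·r_k(n) where K ≥ 2 is such that 2·r_k(n) ≤ |A|. Then the number of k-term arithmetic progressions in A satisfies Γ_k(A) ≥ (K/2)^k · r_k(n). -/
open Finset

/-- The `k`-term arithmetic progression with first term `a` and common difference `d`. -/
def AP (k a d : ℕ) : Finset ℕ := (Finset.range k).image fun i => a + i * d

/-- A finite set of naturals is `k`-AP-free if it contains no `k`-term arithmetic
progression with positive common difference. -/
def APFree (k : ℕ) (S : Finset ℕ) : Prop := ∀ a d : ℕ, 1 ≤ d → ¬ AP k a d ⊆ S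

open Classical in
/-- `rk k n` is the maximum size of a `k`-AP-free subset of `[n] = {1,…,n}`. -/
noncomputable def rk (k n : ℕ) : ℕ :=
  ((Finset.Icc 1 n).powerset.filter fun S => APFree k S).sup Finset.card

/-- `Gamma k A` is the number of `k`-term arithmetic progressions (with positive
common difference) contained in `A`, counted as pairs (first term, difference). -/
noncomputable def Gamma (k : ℕ) (A : Finset ℕ) : ℕ :=
  Set.ncard {q : ℕ × ℕ | 1 ≤ q.2 ∧ AP k q.1 q.2 ⊆ A}

/-!
Every subset of `A` of size `2 r`, where `r = r_k(n)`, contains at least `r` progressions, since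
one can greedily delete an element of some progression until at most `r` elements are left.
Averaging over all such subsets, each progression of `A` lies in a proportion
`C(|A| - k, 2 r - k) / C(|A|, 2 r) ≤ (2 r / |A|)^k = (2 / K)^k` of them, whence
`r ≤ (2 / K)^k Γ_k(A)`.
-/

lemma mem_AP_of_lt {k i : ℕ} (hi : i < k) (a d : ℕ) : a + i * d ∈ AP k a d :=
  mem_image.2 ⟨i, mem_range.2 hi, rfl⟩

lemma left_mem_AP {k : ℕ} (hk : 0 < k) (a d : ℕ) : a ∈ AP k a d := by
  simpa using mem_AP_of_lt hk a d

lemma card_AP {k d : ℕ} (hd : 1 ≤ d) (a : ℕ) : #(AP k a d) = k := by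
  rw [AP, card_image_of_injective _ fun i j h => Nat.eq_of_mul_eq_mul_right hd
    (Nat.add_left_cancel h), card_range]

lemma AP_subset_singleton {k : ℕ} (hk : k ≤ 1) (a d : ℕ) : AP k a d ⊆ {a} := by
  intro x hx
  obtain ⟨i, hi, rfl⟩ := mem_image.1 hx
  rw [mem_range] at hi
  simp [show i = 0 by omega]

lemma card_le_rk {k n : ℕ} {S : Finset ℕ} (hS : S ⊆ Icc 1 n) (hfree : APFree k S) :
    #S ≤ rk k n := by
  classical
  exact le_sup (f := card) (mem_filter.2 ⟨mem_powerset.2 hS, hfree⟩)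

lemma exists_AP_subset_of_rk_lt_card {k n : ℕ} {S : Finset ℕ} (hS : S ⊆ Icc 1 n)
    (h : rk k n < #S) : ∃ a d, 1 ≤ d ∧ AP k a d ⊆ S := by
  by_contra! hfree
  exact (card_le_rk hS hfree).not_gt h

lemma le_card_of_rk_lt_card {k n : ℕ} {S : Finset ℕ} (hS : S ⊆ Icc 1 n)
    (h : rk k n < #S) : k ≤ #S := by
  obtain ⟨a, d, hd, hAP⟩ := exists_AP_subset_of_rk_lt_card hS h
  exact (card_AP hd a).ge.trans (card_le_card hAP)

lemma two_le_of_rk_pos {k n : ℕ} (h : 0 < rk k n) : 2 ≤ k := by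
  by_contra! hk
  refine h.ne' ((Finset.sup_eq_bot_iff _ _).2 fun S hS => ?_)
  classical
  rw [mem_filter] at hS
  refine card_eq_zero.2 (eq_empty_of_forall_notMem fun x hx => hS.2 x 1 le_rfl ?_)
  exact (AP_subset_singleton (by omega) x 1).trans (singleton_subset_iff.2 hx)

/-- A finset version of `Gamma k S`: for `S ⊆ [n]` and `k ≥ 2` the first term and the
difference of a progression in `S` are at most `n`. -/
def apPairs (k n : ℕ) (S : Finset ℕ) : Finset (ℕ × ℕ) :=
  (range (n + 1) ×ˢ Icc 1 n).filter fun q => AP k q.1 q.2 ⊆ S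

section apPairs

variable {k n : ℕ}

lemma apPairs_mono {S T : Finset ℕ} (h : S ⊆ T) : apPairs k n S ⊆ apPairs k n T :=
  fun _ hq => mem_filter.2 ⟨(mem_filter.1 hq).1, (mem_filter.1 hq).2.trans h⟩

lemma apPairs_eq_filter {S T : Finset ℕ} (h : T ⊆ S) :
    apPairs k n T = (apPairs k n S).filter fun q => AP k q.1 q.2 ⊆ T := by
  rw [apPairs, apPairs, filter_filter]
  exact filter_congr fun q _ => ⟨fun hT => ⟨hT.trans h, hT⟩, And.right⟩

lemma mem_apPairs_iff (hk : 2 ≤ k) {S : Finset ℕ} (hS : S ⊆ Icc 1 n) {a d : ℕ} :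
    (a, d) ∈ apPairs k n S ↔ 1 ≤ d ∧ AP k a d ⊆ S := by
  refine ⟨fun h => ?_, fun ⟨hd, hAP⟩ => ?_⟩
  · obtain ⟨hq, hAP⟩ := mem_filter.1 h
    exact ⟨(mem_Icc.1 (mem_product.1 hq).2).1, hAP⟩
  · have h0 := mem_Icc.1 (hS (hAP (left_mem_AP (by omega) a d)))
    have h1 := mem_Icc.1 (hS (hAP (mem_AP_of_lt (by omega : 1 < k) a d)))
    exact mem_filter.2
      ⟨mem_product.2 ⟨mem_range.2 (by omega), mem_Icc.2 ⟨hd, by omega⟩⟩, hAP⟩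

lemma Gamma_eq_card_apPairs (hk : 2 ≤ k) {S : Finset ℕ} (hS : S ⊆ Icc 1 n) :
    Gamma k S = #(apPairs k n S) := by
  rw [Gamma, ← Set.ncard_coe_finset]
  congr 1
  ext ⟨a, d⟩
  exact (mem_apPairs_iff hk hS).symm

lemma card_sub_rk_le_card_apPairs (hk : 2 ≤ k) (S : Finset ℕ) (hS : S ⊆ Icc 1 n) :
    #S - rk k n ≤ #(apPairs k n S) := by
  induction S using strongInductionOn with
  | _ S ih =>
  by_cases h : #S ≤ rk k n
  · simp [Nat.sub_eq_zero_of_le h]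
  obtain ⟨a, d, hd, hAP⟩ := exists_AP_subset_of_rk_lt_card hS (not_le.1 h)
  have ha : a ∈ S := hAP (left_mem_AP (by omega) a d)
  have hlt : #(apPairs k n (S.erase a)) < #(apPairs k n S) := by
    refine card_lt_card ((ssubset_iff_of_subset (apPairs_mono (erase_subset a S))).2
      ⟨(a, d), (mem_apPairs_iff hk hS).2 ⟨hd, hAP⟩, fun h => ?_⟩)
    exact notMem_erase a S ((mem_filter.1 h).2 (left_mem_AP (by omega) a d))
  have := ih _ (erase_ssubset ha) ((erase_subset a S).trans hS)
  rw [card_erase_of_mem ha] at this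
  omega

lemma sum_card_apPairs_powersetCard (S : Finset ℕ) {m : ℕ} (hkm : k ≤ m) :
    ∑ T ∈ S.powersetCard m, #(apPairs k n T) = #(apPairs k n S) * (#S - k).choose (m - k) := by
  calc ∑ T ∈ S.powersetCard m, #(apPairs k n T)
      = ∑ q ∈ apPairs k n S, #((S.powersetCard m).filter fun T => AP k q.1 q.2 ⊆ T) := by
        rw [sum_congr rfl fun T hT => by rw [apPairs_eq_filter (mem_powersetCard.1 hT).1]]
        simp_rw [card_filter]
        exact sum_comm
    _ = ∑ _q ∈ apPairs k n S, (#S - k).choose (m - k) := by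
        refine sum_congr rfl fun q hq => ?_
        obtain ⟨hq, hAP⟩ := mem_filter.1 hq
        have hcard := card_AP (k := k) (mem_Icc.1 (mem_product.1 hq).2).1 q.1
        rw [card_filter_powersetCard_subset _ _ _ hAP (hcard.le.trans hkm), hcard]
    _ = _ := by rw [sum_const, smul_eq_mul]

end apPairs

lemma descFactorial_mul_pow_le {m n : ℕ} (hmn : m ≤ n) (k : ℕ) :
    m.descFactorial k * n ^ k ≤ n.descFactorial k * m ^ k := by
  rw [Nat.descFactorial_eq_prod_range, Nat.descFactorial_eq_prod_range, ← card_range k,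
    ← prod_const, ← prod_const, card_range, ← prod_mul_distrib, ← prod_mul_distrib]
  refine prod_le_prod' fun i _ => ?_
  rw [Nat.sub_mul, Nat.sub_mul, mul_comm n m]
  exact Nat.sub_le_sub_left (Nat.mul_le_mul_left i hmn) _

lemma pow_mul_choose_sub_le {k m n : ℕ} (hkm : k ≤ m) (hmn : m ≤ n) :
    n ^ k * (n - k).choose (m - k) ≤ m ^ k * n.choose m := by
  refine Nat.le_of_mul_le_mul_right ?_ (Nat.descFactorial_pos.2 (hkm.trans hmn))
  calc n ^ k * (n - k).choose (m - k) * n.descFactorial k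
      = n ^ k * (n.choose k * (n - k).choose (m - k)) * k.factorial := by
        rw [Nat.descFactorial_eq_factorial_mul_choose]; ring
    _ = n.choose m * (k.factorial * m.choose k) * n ^ k := by rw [← Nat.choose_mul hkm]; ring
    _ = n.choose m * (m.descFactorial k * n ^ k) := by
        rw [Nat.descFactorial_eq_factorial_mul_choose]; ring
    _ ≤ n.choose m * (n.descFactorial k * m ^ k) :=
        Nat.mul_le_mul_left _ (descFactorial_mul_pow_le hmn k)
    _ = m ^ k * n.choose m * n.descFactorial k := by ring

lemma card_pow_mul_sub_rk_le_pow_mul_Gamma {k n m : ℕ} (hk : 2 ≤ k) {A : Finset ℕ}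
    (hA : A ⊆ Icc 1 n) (hrm : rk k n < m) (hm : m ≤ #A) :
    #A ^ k * (m - rk k n) ≤ m ^ k * Gamma k A := by
  rw [Gamma_eq_card_apPairs hk hA]
  obtain ⟨T, hTA, hT⟩ := exists_subset_card_eq hm
  have hkm : k ≤ m := hT ▸ le_card_of_rk_lt_card (hTA.trans hA) (hT ▸ hrm)
  have hcount : (m - rk k n) * (#A).choose m ≤ #(apPairs k n A) * (#A - k).choose (m - k) :=
    calc (m - rk k n) * (#A).choose m = ∑ T ∈ A.powersetCard m, (#T - rk k n) := by
          rw [sum_congr rfl fun T hT => by rw [(mem_powersetCard.1 hT).2], sum_const,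
            card_powersetCard, smul_eq_mul, mul_comm]
      _ ≤ ∑ T ∈ A.powersetCard m, #(apPairs k n T) := sum_le_sum fun T hT =>
          card_sub_rk_le_card_apPairs hk T ((mem_powersetCard.1 hT).1.trans hA)
      _ = _ := sum_card_apPairs_powersetCard A hkm
  refine Nat.le_of_mul_le_mul_right ?_ (Nat.choose_pos hm)
  calc #A ^ k * (m - rk k n) * (#A).choose m
      ≤ #A ^ k * (#(apPairs k n A) * (#A - k).choose (m - k)) := by
        rw [mul_assoc]; exact Nat.mul_le_mul_left _ hcount
    _ = #(apPairs k n A) * (#A ^ k * (#A - k).choose (m - k)) := by ring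
    _ ≤ #(apPairs k n A) * (m ^ k * (#A).choose m) :=
        Nat.mul_le_mul_left _ (pow_mul_choose_sub_le hkm hm)
    _ = m ^ k * #(apPairs k n A) * (#A).choose m := by ring

theorem sparsening_supersaturation (k n K : ℕ) (hK : 2 ≤ K) (A : Finset ℕ)
    (hA : A ⊆ Finset.Icc 1 n) (hcard : A.card = K * rk k n) :
    ((K : ℝ) / 2) ^ k * rk k n ≤ Gamma k A := by
  obtain hr | hr := Nat.eq_zero_or_pos (rk k n)
  · simp [hr]
  have hk := two_le_of_rk_pos hr
  have key := card_pow_mul_sub_rk_le_pow_mul_Gamma (m := 2 * rk k n) hk hA (by omega)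
    (hcard ▸ Nat.mul_le_mul_right _ hK)
  rw [hcard, show 2 * rk k n - rk k n = rk k n by omega, mul_pow, mul_pow] at key
  have hnat : K ^ k * rk k n ≤ 2 ^ k * Gamma k A :=
    Nat.le_of_mul_le_mul_left (by linarith) (pow_pos hr k)
  rw [div_pow, div_mul_eq_mul_div, div_le_iff₀ (by positivity), mul_comm (Gamma k A : ℝ)]
  exact_mod_cast hnat
end

section
/- Suppose T ⊆ ℤ_p has size t and the d-uniform Cayley sum-hypergraph G(ℤ_p, T) has independence number α < t/2, with 2t ≤ p. Then there exists a set F ⊆ ℤ_p of size at most 2t such that ℤ_p \ F is not equal to dA for any A ⊆ ℤ_p, i.e. f_d(p) ≤ 2t. -/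
open Finset

/-- The `d`-fold sumset `dA = A + ⋯ + A` of a finite set `A ⊆ ℤ_p`. -/
def dfoldSum (p d : ℕ) (A : Finset (ZMod p)) : Finset (ZMod p) :=
  (Fintype.piFinset fun _ : Fin d => A).image fun f => ∑ i, f i

/-- `A` is an independent set in the `d`-uniform Cayley sum-hypergraph `G(ℤ_p, T)`,
whose edges are the `d`-element sets with sum in `T`. -/
def IsIndepCayley (p d : ℕ) (T A : Finset (ZMod p)) : Prop :=
  ∀ e : Finset (ZMod p), e ⊆ A → e.card = d → e.sum id ∉ T

/-!
If every set of size at most `2t` were a sumset complement, pick for each `F' ⊆ ℤ_p \ T` with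
`|F'| ≤ t` a set `A` with `dA = ℤ_p \ (T ∪ F')`. Every `d`-subset of `A` sums into `dA`, so `A` is
independent and `2|A| < t`; moreover `d·a ∈ dA` for `a ∈ A`, so the dilate `d·A` is a subset of
`ℤ_p \ T`, of the same size since `d` is invertible modulo `p`. As `dA` determines `F'`, the map
`F' ↦ d·A` injects the subsets of `ℤ_p \ T` of size at most `t` into those of size below `t/2`,
which is absurd because `|ℤ_p \ T| ≥ t`.
-/

section Sumset

variable {p d : ℕ} {A T : Finset (ZMod p)}

lemma image_natCast_mul_subset_dfoldSum : A.image ((d : ZMod p) * ·) ⊆ dfoldSum p d A :=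
  image_subset_iff.mpr fun a ha =>
    mem_image.mpr ⟨fun _ => a, Fintype.mem_piFinset.mpr fun _ => ha, by simp⟩

lemma sum_mem_dfoldSum {e : Finset (ZMod p)} (he : e ⊆ A) (hcard : e.card = d) :
    e.sum id ∈ dfoldSum p d A := by
  let eqv : Fin d ≃ e := (e.equivFinOfCardEq hcard).symm
  refine mem_image.mpr ⟨fun i => eqv i, Fintype.mem_piFinset.mpr fun i => he (eqv i).2, ?_⟩
  rw [Equiv.sum_comp eqv ((↑) : e → ZMod p)]
  exact sum_coe_sort e id

lemma isIndepCayley_of_card_lt (hA : A.card < d) : IsIndepCayley p d T A :=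
  fun e he hcard => absurd (card_le_card he) (by omega)

lemma isIndepCayley_of_disjoint (hT : Disjoint (dfoldSum p d A) T) : IsIndepCayley p d T A :=
  fun _ he hcard => disjoint_left.mp hT (sum_mem_dfoldSum he hcard)

/-- Sets of size `min (d - 1) p` are independent, so a small independence number forces `d < p`. -/
lemma lt_of_forall_isIndepCayley_two_mul_card_lt [NeZero p] {t : ℕ} (hd : 2 ≤ d)
    (h2t : 2 * t ≤ p) (hα : ∀ A : Finset (ZMod p), IsIndepCayley p d T A → 2 * A.card < t) :
    d < p := by
  obtain ⟨B, -, hB⟩ := exists_subset_card_eq (s := (univ : Finset (ZMod p))) (n := min (d - 1) p)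
    (by rw [card_univ, ZMod.card]; omega)
  have := hα B (isIndepCayley_of_card_lt (by omega))
  omega

end Sumset

lemma card_filter_powerset_two_mul_lt {α : Type*} {U : Finset α} {t : ℕ} (ht : t ≤ U.card) :
    #{S ∈ U.powerset | 2 * #S < t} < #{S ∈ U.powerset | #S ≤ t} := by
  obtain ⟨S, hSU, hS⟩ := exists_subset_card_eq ht
  refine card_lt_card ⟨monotone_filter_right _ fun _ h => by omega, fun h => ?_⟩
  have := (mem_filter.mp (h (mem_filter.mpr ⟨mem_powerset.mpr hSU, hS.le⟩))).2
  omega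

lemma eq_of_univ_sdiff_union_eq {α : Type*} [Fintype α] [DecidableEq α] {T F₁ F₂ : Finset α}
    (h₁ : Disjoint T F₁) (h₂ : Disjoint T F₂) (h : univ \ (T ∪ F₁) = univ \ (T ∪ F₂)) :
    F₁ = F₂ := by
  rw [← compl_eq_univ_sdiff, ← compl_eq_univ_sdiff, compl_inj_iff] at h
  rw [← union_sdiff_cancel_left h₁, h, union_sdiff_cancel_left h₂]

theorem sumset_certificate (p d t : ℕ) [NeZero p] (hp : p.Prime) (hd : 2 ≤ d)
    (T : Finset (ZMod p)) (hT : T.card = t) (h2t : 2 * t ≤ p)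
    (hα : ∀ A : Finset (ZMod p), IsIndepCayley p d T A → 2 * A.card < t) :
    ∃ F : Finset (ZMod p), F.card ≤ 2 * t ∧
      ∀ A : Finset (ZMod p), Finset.univ \ F ≠ dfoldSum p d A := by
  classical
  by_contra! hcon
  have := Fact.mk hp
  have hmul : Function.Injective ((d : ZMod p) * ·) := mul_right_injective₀ <|
    (ZMod.natCast_eq_zero_iff d p).not.mpr <| Nat.not_dvd_of_pos_of_lt (by omega)
      (lt_of_forall_isIndepCayley_two_mul_card_lt hd h2t hα)
  set 𝒟 := {S ∈ (univ \ T).powerset | #S ≤ t}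
  have hdisj : ∀ F' ∈ 𝒟, Disjoint T F' := fun F' hF' =>
    (subset_sdiff.mp (mem_powerset.mp (mem_filter.mp hF').1)).2.symm
  choose! A hA using fun F' (hF' : F' ∈ 𝒟) =>
    hcon (T ∪ F') ((card_union_le T F').trans (by have := (mem_filter.mp hF').2; omega))
  have hA_sub : ∀ F' ∈ 𝒟, dfoldSum p d (A F') ⊆ univ \ T :=
    fun F' hF' => hA F' hF' ▸ sdiff_subset_sdiff le_rfl subset_union_left
  refine (card_filter_powerset_two_mul_lt (U := univ \ T) (t := t) ?_).not_ge
    (card_le_card_of_injOn (fun F' => (A F').image ((d : ZMod p) * ·)) (fun F' hF' => ?_)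
      fun F₁ hF₁ F₂ hF₂ h => eq_of_univ_sdiff_union_eq (hdisj F₁ hF₁) (hdisj F₂ hF₂) ?_)
  · rw [card_sdiff, inter_univ, card_univ, ZMod.card, hT]; omega
  · simp only [coe_filter, Set.mem_ofPred_eq, mem_powerset, card_image_of_injective _ hmul]
    exact ⟨image_natCast_mul_subset_dfoldSum.trans (hA_sub F' hF'),
      hα _ (isIndepCayley_of_disjoint (disjoint_of_subset_left (hA_sub F' hF') sdiff_disjoint))⟩
  · rw [hA F₁ hF₁, hA F₂ hF₂, image_injective hmul h]
end
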